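/- arXiv:2305.11743 — 5 statements merged into one kernel-verified Lean document; each statement's English description precedes it below -/
import Mathlib

section
/- Let T = (n_1,...,n_s) be positive integers, s ≥ 3, and fix i ∈ {1,...,s}. Let D: Ker_Z(T) → Z^{2s-1} be defined by D(u) = (u, -[u]^i), where [u]^i deletes the i-th coordinate of u. Let u be the circuit with support {i, j} (for some j ≠ i): u_j = n_i/gcd(n_i,n_j) > 0, u_i = -n_j/gcd(n_i,n_j), other coordinates 0. Then D(u) admits no proper semiconformal decomposition D(u) = D(v) + D(w) with v, w ∈ Ker_Z(T) both nonzero. -/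
open BigOperators

/-- The map `D` sending `u ∈ Ker_Z(T)` to `(u, -[u]^i)`. -/
def Dmap {s : ℕ} (i : Fin s) (u : Fin s → ℤ) : (Fin s ⊕ {l : Fin s // l ≠ i}) → ℤ :=
  Sum.elim u (fun l => -u l.1)

/-- Semiconformality of a decomposition `v + w`. -/
def SemiConf {ι : Type*} (v w : ι → ℤ) : Prop :=
  ∀ l, (0 < v l → 0 ≤ w l) ∧ (w l < 0 → v l ≤ 0)

/-- Any circuit of `Λ(T)_{i}` having `i` in its support is indispensable. -/
theorem stmt10 {s : ℕ} (hs : 3 ≤ s) (n : Fin s → ℕ) (hn : ∀ l, 0 < n l)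
    (i j : Fin s) (hij : j ≠ i)
    (u : Fin s → ℤ)
    (huj : u j = ((n i / Nat.gcd (n i) (n j) : ℕ) : ℤ))
    (hui : u i = -((n j / Nat.gcd (n i) (n j) : ℕ) : ℤ))
    (hu0 : ∀ l, l ≠ i → l ≠ j → u l = 0) :
    ¬ ∃ v w : Fin s → ℤ,
        (∑ l, v l * (n l : ℤ) = 0) ∧ (∑ l, w l * (n l : ℤ) = 0) ∧
        v ≠ 0 ∧ w ≠ 0 ∧
        Dmap i u = Dmap i v + Dmap i w ∧ SemiConf (Dmap i v) (Dmap i w) := by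
  rintro ⟨v, w, hvker, hwker, hv, hw, hD, hSC⟩
  set g := Nat.gcd (n i) (n j) with hg
  have hgpos : 0 < g := Nat.gcd_pos_of_pos_left _ (hn i)
  set a : ℕ := n i / g with ha
  set b : ℕ := n j / g with hb
  have hag : a * g = n i := Nat.div_mul_cancel (Nat.gcd_dvd_left _ _)
  have hbg : b * g = n j := Nat.div_mul_cancel (Nat.gcd_dvd_right _ _)
  have hapos : 0 < a := Nat.div_pos (Nat.le_of_dvd (hn i) (Nat.gcd_dvd_left _ _)) hgpos
  have hbpos : 0 < b := Nat.div_pos (Nat.le_of_dvd (hn j) (Nat.gcd_dvd_right _ _)) hgpos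
  have hcop : Nat.Coprime a b := Nat.coprime_div_gcd_div_gcd hgpos
  have hsum : ∀ l, u l = v l + w l := by
    intro l
    have := congrFun hD (Sum.inl l)
    simpa [Dmap] using this
  have hSC1 : ∀ l, (0 < v l → 0 ≤ w l) ∧ (w l < 0 → v l ≤ 0) := by
    intro l
    have := hSC (Sum.inl l)
    simpa [Dmap, SemiConf] using this
  have hSC2 : ∀ l, l ≠ i → (v l < 0 → w l ≤ 0) ∧ (0 < w l → 0 ≤ v l) := by
    intro l hl
    have h := hSC (Sum.inr ⟨l, hl⟩)
    simp only [Dmap, Sum.elim_inr] at h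
    omega
  have hvz : ∀ l, l ≠ i → l ≠ j → v l = 0 ∧ w l = 0 := by
    intro l hli hlj
    have h1 := hSC1 l
    have h2 := hSC2 l hli
    have h3 := hsum l
    have h4 := hu0 l hli hlj
    omega
  have hapos' : (0 : ℤ) < (a : ℤ) := by exact_mod_cast hapos
  have hbpos' : (0 : ℤ) < (b : ℤ) := by exact_mod_cast hbpos
  have haj : u j = (a : ℤ) := huj
  have hai : u i = -(b : ℤ) := hui
  have hvj : 0 ≤ v j ∧ v j ≤ (a : ℤ) := by
    have h1 := hSC1 j
    have h2 := hSC2 j hij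
    have h3 := hsum j
    omega
  have hvi : v i ≤ 0 := by
    have h1 := hSC1 i
    have h3 := hsum i
    omega
  -- reduce the kernel sum
  have hker2 : v i * (n i : ℤ) + v j * (n j : ℤ) = 0 := by
    have hsub : ∑ l ∈ ({i, j} : Finset (Fin s)), v l * (n l : ℤ)
        = ∑ l, v l * (n l : ℤ) := by
      apply Finset.sum_subset (Finset.subset_univ _)
      intro l _ hl
      simp only [Finset.mem_insert, Finset.mem_singleton] at hl
      push_neg at hl
      rw [(hvz l hl.1 hl.2).1, zero_mul]
    rw [hvker] at hsub
    rwa [Finset.sum_pair (Ne.symm hij)] at hsub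
  have hni : (n i : ℤ) = (a : ℤ) * (g : ℤ) := by exact_mod_cast hag.symm
  have hnj : (n j : ℤ) = (b : ℤ) * (g : ℤ) := by exact_mod_cast hbg.symm
  have hg0 : (g : ℤ) ≠ 0 := by exact_mod_cast hgpos.ne'
  have hkey : v i * (a : ℤ) + v j * (b : ℤ) = 0 := by
    have h5 : (v i * (a : ℤ) + v j * (b : ℤ)) * (g : ℤ) = 0 := by
      rw [hni, hnj] at hker2; ring_nf at hker2 ⊢; linarith
    rcases mul_eq_zero.mp h5 with h | h
    · exact h
    · exact absurd h hg0
  have hdvd : (a : ℤ) ∣ v j := by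
    have h1 : (a : ℤ) ∣ v j * (b : ℤ) := ⟨-v i, by linarith⟩
    have hcop' : IsCoprime (a : ℤ) (b : ℤ) := by
      rw [Int.isCoprime_iff_gcd_eq_one]
      simpa [Int.gcd_natCast_natCast] using hcop
    exact hcop'.dvd_of_dvd_mul_right h1
  obtain ⟨k, hk⟩ := hdvd
  have hk01 : k = 0 ∨ k = 1 := by
    rcases lt_trichotomy k 0 with h | h | h
    · exfalso; nlinarith [hvj.1, hvj.2]
    · left; exact h
    · by_contra h2
      have h3 : 2 ≤ k := by omega
      exfalso; nlinarith [hvj.2]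
  rcases hk01 with h | h
  · -- v = 0
    apply hv
    have hvj0 : v j = 0 := by rw [hk, h, mul_zero]
    have hvi0 : v i = 0 := by
      have : v i * (a : ℤ) = 0 := by rw [hvj0] at hkey; linarith
      rcases mul_eq_zero.mp this with h' | h'
      · exact h'
      · exact absurd h' hapos'.ne'
    funext l
    by_cases hli : l = i
    · simpa [hli] using hvi0
    · by_cases hlj : l = j
      · simpa [hlj] using hvj0
      · simpa using (hvz l hli hlj).1
  · -- w = 0
    apply hw
    have hvja : v j = (a : ℤ) := by rw [hk, h, mul_one]
    have hvib : v i = -(b : ℤ) := by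
      have h6 : (v i + (b : ℤ)) * (a : ℤ) = 0 := by rw [hvja] at hkey; ring_nf; linarith
      rcases mul_eq_zero.mp h6 with h' | h'
      · linarith
      · exact absurd h' hapos'.ne'
    funext l
    by_cases hli : l = i
    · have := hsum i
      subst hli
      simp only [Pi.zero_apply]
      omega
    · by_cases hlj : l = j
      · have := hsum j
        subst hlj
        simp only [Pi.zero_apply]
        omega
      · simpa using (hvz l hli hlj).2
end

section
/- Let T = (n_1,...,n_s) be positive integers, s ≥ 3, and let i, j, k be distinct indices. For each l ∈ {i,j,k} let c_l be the least positive integer such that c_l·n_l lies in the numerical semigroup generated by the other two of n_i, n_j, n_k. Suppose (n_i, n_j, n_k) is a complete intersection on n_i, i.e., c_j·n_j = c_k·n_k ≠ c_i·n_i. Let u ∈ Ker_Z(T) be the circuit with support {j,k}: u_j = n_k/gcd(n_j,n_k), u_k = -n_j/gcd(n_j,n_k), zeros elsewhere. Then D(u) = (u, -[u]^i) admits no proper semiconformal decomposition D(u) = D(v) + D(w) with nonzero v, w ∈ Ker_Z(T). -/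
open BigOperators

/-- Membership in the numerical semigroup generated by `a` and `b`. -/
def InSg (a b x : ℕ) : Prop := ∃ p q : ℕ, x = p * a + q * b

/-- `c` is the least positive integer such that `c·m ∈ ⟨a, b⟩`. -/
def IsLeastC (a b m c : ℕ) : Prop :=
  0 < c ∧ InSg a b (c * m) ∧ ∀ c', 0 < c' → InSg a b (c' * m) → c ≤ c'

lemma keyNat (ni nj nk g j' k' ci A : ℕ) (hni : 0 < ni) (hg : 0 < g)
    (hj' : nj = g * j') (hk' : nk = g * k') (hj'0 : 0 < j') (hk'0 : 0 < k')
    (hco : Nat.Coprime j' k')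
    (hci : IsLeastC nj nk ni ci)
    (hcjmin : ∀ c', 0 < c' → InSg nk ni (c' * nj) → k' ≤ c')
    (hckmin : ∀ c', 0 < c' → InSg ni nj (c' * nk) → j' ≤ c')
    (hA : A * ni = k' * nj)
    (hne : k' * nj ≠ ci * ni) : False := by
  obtain ⟨hcipos, ⟨p, q, hrep⟩, hcimin⟩ := hci
  have hnj : 0 < nj := by rw [hj']; positivity
  have hnk : 0 < nk := by rw [hk']; positivity
  have hApos : 0 < A := by
    rcases Nat.eq_zero_or_pos A with h | h
    · exfalso; rw [h, zero_mul] at hA; exact absurd hA.symm (by positivity)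
    · exact h
  have hciA : ci ≤ A := hcimin A hApos ⟨k', 0, by rw [hA]; ring⟩
  have hle : ci * ni ≤ k' * nj := by
    calc ci * ni ≤ A * ni := Nat.mul_le_mul_right _ hciA
    _ = k' * nj := hA
  rcases Nat.eq_zero_or_pos q with hq | hq
  · -- q = 0 : ci * ni = p * nj
    subst hq
    have hrep' : ci * ni = p * nj := by linarith
    have hp : 0 < p := by
      rcases Nat.eq_zero_or_pos p with h | h
      · exfalso; rw [h, zero_mul] at hrep'; exact absurd hrep' (by positivity)
      · exact h
    have h1 : k' ≤ p := hcjmin p hp ⟨0, ci, by linarith⟩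
    have h2 : p ≤ k' := Nat.le_of_mul_le_mul_right (by linarith) hnj
    exact hne (by rw [hrep', Nat.le_antisymm h2 h1])
  · rcases Nat.eq_zero_or_pos p with hp | hp
    · -- p = 0 : ci * ni = q * nk
      subst hp
      have hrep' : ci * ni = q * nk := by linarith
      have h1 : j' ≤ q := hckmin q hq ⟨ci, 0, by linarith⟩
      have hknj : k' * nj = j' * nk := by rw [hj', hk']; ring
      have h2 : q ≤ j' := Nat.le_of_mul_le_mul_right (by calc q * nk = ci * ni := hrep'.symm
        _ ≤ k' * nj := hle
        _ = j' * nk := hknj) hnk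
      exact hne (by rw [hrep', Nat.le_antisymm h2 h1]; exact hknj)
    · -- p, q ≥ 1
      have h1 : ci * k' * nj = A * p * nj + A * q * nk := by
        calc ci * k' * nj = ci * (A * ni) := by rw [hA]; ring
        _ = A * (ci * ni) := by ring
        _ = A * (p * nj + q * nk) := by rw [hrep]
        _ = A * p * nj + A * q * nk := by ring
      have hAple : A * p ≤ ci * k' := Nat.le_of_mul_le_mul_right (by
        calc A * p * nj ≤ A * p * nj + A * q * nk := Nat.le_add_right _ _
        _ = ci * k' * nj := h1.symm) hnj
      obtain ⟨X, hX⟩ := Nat.le.dest hAple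
      have hXnj : X * nj = A * q * nk := by
        have e : A * p * nj + X * nj = A * p * nj + A * q * nk := by
          calc A * p * nj + X * nj = (A * p + X) * nj := by ring
          _ = ci * k' * nj := by rw [hX]
          _ = A * p * nj + A * q * nk := h1
        exact Nat.add_left_cancel e
      have hXj' : X * j' = A * q * k' := by
        apply Nat.eq_of_mul_eq_mul_left hg
        have : X * (g * j') = A * q * (g * k') := by rw [← hj', ← hk']; exact hXnj
        calc g * (X * j') = X * (g * j') := by ring
        _ = A * q * (g * k') := this
        _ = g * (A * q * k') := by ring
      have hdvd : k' ∣ X := (Nat.Coprime.symm hco).dvd_of_dvd_mul_right ⟨A * q, by linarith [hXj']⟩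
      obtain ⟨t, ht⟩ := hdvd
      have htj : t * j' = A * q := by
        apply Nat.eq_of_mul_eq_mul_left hk'0
        calc k' * (t * j') = (k' * t) * j' := by ring
        _ = X * j' := by rw [ht]
        _ = A * q * k' := hXj'
        _ = k' * (A * q) := by ring
      have ht1 : 0 < t := by
        rcases Nat.eq_zero_or_pos t with h | h
        · exfalso; rw [h, zero_mul] at htj
          exact absurd htj.symm (by positivity)
        · exact h
      have hkey : ci * ni = p * nj + t * ni := by
        apply Nat.eq_of_mul_eq_mul_left hk'0
        calc k' * (ci * ni) = (A * p + k' * t) * ni := by rw [ht] at hX; rw [hX]; ring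
        _ = p * (A * ni) + k' * (t * ni) := by ring
        _ = p * (k' * nj) + k' * (t * ni) := by rw [hA]
        _ = k' * (p * nj + t * ni) := by ring
      have htci : t ≤ ci := by
        by_contra hcon
        push_neg at hcon
        have : ci * ni < t * ni := (Nat.mul_lt_mul_right hni).mpr hcon
        have : 0 < p * nj := by positivity
        omega
      obtain ⟨c', hc'⟩ := Nat.le.dest htci
      have hc'eq : c' * ni = p * nj := by
        have : (t + c') * ni = p * nj + t * ni := by rw [hc']; exact hkey
        have e2 : t * ni + c' * ni = p * nj + t * ni := by rw [← Nat.add_mul]; exact this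
        omega
      have hkp : k' ≤ p := hcjmin p hp ⟨0, c', by rw [hc'eq]; ring⟩
      have hpk : p ≤ k' := Nat.le_of_mul_le_mul_right (by
        calc p * nj ≤ p * nj + t * ni := Nat.le_add_right _ _
        _ = ci * ni := hkey.symm
        _ ≤ k' * nj := hle) hnj
      have hpe : p = k' := Nat.le_antisymm hpk hkp
      have : ni ≤ t * ni := Nat.le_mul_of_pos_left _ ht1
      rw [hpe] at hkey
      omega

/-- If `(n_i, n_j, n_k)` is a complete intersection on `n_i`, then the circuit with
support `{j, k}` is indispensable in `Λ(T)_{i}`. -/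
theorem stmt11 {s : ℕ} (hs : 3 ≤ s) (n : Fin s → ℕ) (hn : ∀ l, 0 < n l)
    (i j k : Fin s) (hij : i ≠ j) (hik : i ≠ k) (hjk : j ≠ k)
    (ci cj ck : ℕ)
    (hci : IsLeastC (n j) (n k) (n i) ci)
    (hcj : IsLeastC (n k) (n i) (n j) cj)
    (hck : IsLeastC (n i) (n j) (n k) ck)
    (hCI : cj * n j = ck * n k ∧ cj * n j ≠ ci * n i)
    (u : Fin s → ℤ)
    (huj : u j = ((n k / Nat.gcd (n j) (n k) : ℕ) : ℤ))
    (huk : u k = -((n j / Nat.gcd (n j) (n k) : ℕ) : ℤ))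
    (hu0 : ∀ l, l ≠ j → l ≠ k → u l = 0) :
    ¬ ∃ v w : Fin s → ℤ,
        (∑ l, v l * (n l : ℤ) = 0) ∧ (∑ l, w l * (n l : ℤ) = 0) ∧
        v ≠ 0 ∧ w ≠ 0 ∧
        Dmap i u = Dmap i v + Dmap i w ∧ SemiConf (Dmap i v) (Dmap i w) := by
  rintro ⟨v, w, hvker, hwker, hvne, hwne, hD, hSC⟩
  -- gcd setup
  obtain ⟨G, hGdef⟩ : ∃ G : ℕ, G = Nat.gcd (n j) (n k) := ⟨_, rfl⟩
  rw [← hGdef] at huj huk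
  have hg : 0 < G := hGdef ▸ Nat.gcd_pos_of_pos_left (n k) (hn j)
  obtain ⟨j', hj'⟩ : G ∣ n j := hGdef ▸ Nat.gcd_dvd_left (n j) (n k)
  obtain ⟨k', hk'⟩ : G ∣ n k := hGdef ▸ Nat.gcd_dvd_right (n j) (n k)
  have hjq : n j / G = j' := by
    rw [hj']; exact Nat.mul_div_cancel_left _ hg
  have hkq : n k / G = k' := by
    rw [hk']; exact Nat.mul_div_cancel_left _ hg
  rw [hkq] at huj
  rw [hjq] at huk
  have hj'0 : 0 < j' := by
    rcases Nat.eq_zero_or_pos j' with h | h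
    · exfalso; have := hn j; rw [hj', h, mul_zero] at this; exact absurd this (lt_irrefl _)
    · exact h
  have hk'0 : 0 < k' := by
    rcases Nat.eq_zero_or_pos k' with h | h
    · exfalso; have := hn k; rw [hk', h, mul_zero] at this; exact absurd this (lt_irrefl _)
    · exact h
  have hco : Nat.Coprime j' k' := by
    have := Nat.coprime_div_gcd_div_gcd (m := n j) (n := n k) (hGdef ▸ hg)
    rwa [← hGdef, hjq, hkq] at this
  -- unpack the decomposition conditions
  have hDl : ∀ l, u l = v l + w l := fun l => congrFun hD (Sum.inl l)
  have hSCl : ∀ l, (0 < v l → 0 ≤ w l) ∧ (w l < 0 → v l ≤ 0) := fun l => hSC (Sum.inl l)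
  have hSCr : ∀ l, l ≠ i → ((0 < -v l → 0 ≤ -w l) ∧ (-w l < 0 → -v l ≤ 0)) :=
    fun l h => hSC (Sum.inr ⟨l, h⟩)
  have hji : j ≠ i := fun h => hij h.symm
  have hki : k ≠ i := fun h => hik h.symm
  -- vanishing outside {i, j, k}
  have hzero : ∀ l, l ≠ i → l ≠ j → l ≠ k → v l = 0 ∧ w l = 0 := by
    intro l h1 h2 h3
    have hsum : v l + w l = 0 := by rw [← hDl l]; exact hu0 l h2 h3
    have e1 := hSCl l
    have e2 := hSCr l h1
    omega
  have hui : u i = 0 := hu0 i hij hik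
  have hvi : v i = -w i := by have := hDl i; omega
  have hwi : 0 ≤ w i := by
    have e1 := (hSCl i).2
    omega
  have hvjw : 0 ≤ v j ∧ 0 ≤ w j := by
    have hsum : v j + w j = (k' : ℤ) := by rw [← hDl j, huj]
    have e1 := hSCl j
    have e2 := hSCr j hji
    have : (0 : ℤ) < (k' : ℤ) := by exact_mod_cast hk'0
    omega
  have hvkw : v k ≤ 0 ∧ w k ≤ 0 := by
    have hsum : v k + w k = -(j' : ℤ) := by rw [← hDl k, huk]
    have e1 := hSCl k
    have e2 := hSCr k hki
    have : (0 : ℤ) < (j' : ℤ) := by exact_mod_cast hj'0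
    omega
  -- reduce kernel sums to three terms
  have hsum3 : ∀ f : Fin s → ℤ, (∀ l, l ≠ i → l ≠ j → l ≠ k → f l = 0) →
      (∑ l, f l * (n l : ℤ)) = f i * n i + f j * n j + f k * n k := by
    intro f hf
    rw [← Finset.sum_subset (Finset.subset_univ ({i, j, k} : Finset (Fin s))) (fun x _ hx => by
      simp only [Finset.mem_insert, Finset.mem_singleton, not_or] at hx
      rw [hf x hx.1 hx.2.1 hx.2.2, zero_mul])]
    rw [Finset.sum_insert (by simp [hij, hik]), Finset.sum_insert (by simp [hjk]),
      Finset.sum_singleton]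
    ring
  have hv3 : v i * (n i : ℤ) + v j * n j + v k * n k = 0 := by
    rw [← hsum3 v (fun l h1 h2 h3 => (hzero l h1 h2 h3).1)]; exact hvker
  have hw3 : w i * (n i : ℤ) + w j * n j + w k * n k = 0 := by
    rw [← hsum3 w (fun l h1 h2 h3 => (hzero l h1 h2 h3).2)]; exact hwker
  have hnjZ : (n j : ℤ) = (G : ℤ) * (j' : ℤ) := by exact_mod_cast hj'
  have hnkZ : (n k : ℤ) = (G : ℤ) * (k' : ℤ) := by exact_mod_cast hk'
  have hgZ : ((G : ℤ)) ≠ 0 := by positivity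
  have hk'Z : (0 : ℤ) < (k' : ℤ) := by exact_mod_cast hk'0
  have hj'Z : (0 : ℤ) < (j' : ℤ) := by exact_mod_cast hj'0
  have hcop : IsCoprime (k' : ℤ) (j' : ℤ) := by
    rw [Int.isCoprime_iff_gcd_eq_one, Int.gcd_natCast_natCast]
    exact Nat.Coprime.symm hco
  rcases eq_or_lt_of_le hwi with hwi0 | hwipos
  · -- case w i = 0 : v and w restricted to {j, k}, both multiples of circuit
    have hvi0 : v i = 0 := by omega
    have hwieq : w i = 0 := hwi0.symm
    have hmul : ∀ x : Fin s → ℤ, (x i * (n i : ℤ) + x j * n j + x k * n k = 0) → x i = 0 →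
        ∃ t : ℤ, x j = (k' : ℤ) * t ∧ x k = -((j' : ℤ) * t) := by
      intro x h3 hi0
      have h2 : x j * ((G : ℤ) * j') + x k * ((G : ℤ) * k') = 0 := by
        rw [← hnjZ, ← hnkZ]; rw [hi0] at h3; linarith
      have h5 : (j' : ℤ) * x j = (k' : ℤ) * (-x k) :=
        mul_left_cancel₀ hgZ (by linear_combination h2)
      have hdvd : (k' : ℤ) ∣ x j := by
        have hd : (k' : ℤ) ∣ (j' : ℤ) * x j := ⟨-x k, by linarith⟩
        exact hcop.dvd_of_dvd_mul_left hd
      obtain ⟨t, ht⟩ := hdvd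
      refine ⟨t, ht, ?_⟩
      have : (k' : ℤ) * (j' * t) = (k' : ℤ) * (-x k) := by rw [← h5, ht]; ring
      have := mul_left_cancel₀ (ne_of_gt hk'Z) this
      linarith
    obtain ⟨t, htj, htk⟩ := hmul v hv3 hvi0
    obtain ⟨t2, ht2j, ht2k⟩ := hmul w hw3 hwieq
    have hsumjk : (k' : ℤ) * t + (k' : ℤ) * t2 = (k' : ℤ) * 1 := by
      rw [← htj, ← ht2j, mul_one]
      have := hDl j; rw [huj] at this; linarith
    have htt : t + t2 = 1 := by
      have : (k' : ℤ) * (t + t2) = (k' : ℤ) * 1 := by linear_combination hsumjk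
      exact mul_left_cancel₀ (ne_of_gt hk'Z) this
    have ht0 : 0 ≤ t := by
      rcases le_or_gt 0 t with h | h
      · exact h
      · exfalso
        have := mul_neg_of_pos_of_neg hk'Z h
        rw [← htj] at this
        linarith [hvjw.1]
    have ht20 : 0 ≤ t2 := by
      rcases le_or_gt 0 t2 with h | h
      · exact h
      · exfalso
        have := mul_neg_of_pos_of_neg hk'Z h
        rw [← ht2j] at this
        linarith [hvjw.2]
    have : t = 0 ∨ t2 = 0 := by omega
    rcases this with h | h
    · apply hvne
      funext l
      by_cases hl1 : l = i
      · rw [hl1]; exact hvi0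
      by_cases hl2 : l = j
      · rw [hl2]; simp [htj, h]
      by_cases hl3 : l = k
      · rw [hl3]; simp [htk, h]
      · exact (hzero l hl1 hl2 hl3).1
    · apply hwne
      funext l
      by_cases hl1 : l = i
      · rw [hl1]; exact hwieq
      by_cases hl2 : l = j
      · rw [hl2]; simp [ht2j, h]
      by_cases hl3 : l = k
      · rw [hl3]; simp [ht2k, h]
      · exact (hzero l hl1 hl2 hl3).2
  · -- case w i > 0
    -- first: cj = k' and ck = j'
    have hcjle : cj ≤ k' := hcj.2.2 k' hk'0 ⟨j', 0, by rw [hj', hk']; ring⟩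
    have hlcm : G * (j' * k') ∣ cj * (G * j') := by
      have h1 : n j ∣ cj * n j := dvd_mul_left _ _
      have h2 : n k ∣ cj * n j := hCI.1 ▸ dvd_mul_left _ _
      have h3 : Nat.lcm (n j) (n k) ∣ cj * n j := Nat.lcm_dvd h1 h2
      rw [hj', hk'] at h3
      rwa [Nat.lcm_mul_left, Nat.Coprime.lcm_eq_mul hco] at h3
    have hcjge : k' ≤ cj := by
      have hpos : 0 < cj * (G * j') := Nat.mul_pos hcj.1 (by positivity)
      have hle := Nat.le_of_dvd hpos hlcm
      have h2 : (G * j') * k' ≤ (G * j') * cj := by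
        calc (G * j') * k' = G * (j' * k') := by ring
        _ ≤ cj * (G * j') := hle
        _ = (G * j') * cj := by ring
      exact Nat.le_of_mul_le_mul_left h2 (by positivity)
    have hcje : cj = k' := le_antisymm hcjle hcjge
    have hcke : ck = j' := by
      have h : j' * n k = ck * n k := by
        calc j' * n k = j' * (G * k') := by rw [hk']
        _ = k' * (G * j') := by ring
        _ = k' * n j := by rw [hj']
        _ = ck * n k := by rw [← hcje]; exact hCI.1
      exact (Nat.eq_of_mul_eq_mul_right (hn k) h).symm
    -- v j > 0
    have hvjpos : 0 < v j := by
      by_contra hcon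
      push_neg at hcon
      have hvj0 : v j = 0 := le_antisymm hcon hvjw.1
      have t1 : v i * (n i : ℤ) < 0 :=
        mul_neg_of_neg_of_pos (by omega) (by exact_mod_cast hn i)
      have t2 : v k * (n k : ℤ) ≤ 0 :=
        mul_nonpos_iff.mpr (Or.inr ⟨hvkw.1, by positivity⟩)
      rw [hvj0] at hv3
      linarith
    obtain ⟨B, hB⟩ : ∃ B : ℕ, v j = (B : ℤ) :=
      ⟨(v j).toNat, (Int.toNat_of_nonneg hvjw.1).symm⟩
    obtain ⟨C, hC⟩ : ∃ C : ℕ, -v k = (C : ℤ) :=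
      ⟨(-v k).toNat, (Int.toNat_of_nonneg (by linarith [hvkw.1])).symm⟩
    obtain ⟨A, hA⟩ : ∃ A : ℕ, w i = (A : ℤ) :=
      ⟨(w i).toNat, (Int.toNat_of_nonneg hwi).symm⟩
    have hBeq : B * n j = C * n k + A * n i := by
      have hZ : (B : ℤ) * n j = C * n k + A * n i := by
        rw [← hB, ← hC, ← hA]
        have hviN : v i * (n i : ℤ) = -(w i * (n i : ℤ)) := by rw [hvi]; ring
        linarith [hv3, hviN]
      exact_mod_cast hZ
    have hBpos : 0 < B := by
      have : (0 : ℤ) < (B : ℤ) := by rw [← hB]; exact hvjpos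
      exact_mod_cast this
    have hk'B : k' ≤ B := by
      have := hcj.2.2 B hBpos ⟨C, A, hBeq⟩
      omega
    have hvjeq : v j = (k' : ℤ) := by
      have h1 : v j + w j = (k' : ℤ) := by rw [← hDl j, huj]
      have h2 : (k' : ℤ) ≤ v j := by rw [hB]; exact_mod_cast hk'B
      linarith [hvjw.2]
    have hwj0 : w j = 0 := by
      have h1 : v j + w j = (k' : ℤ) := by rw [← hDl j, huj]
      linarith [hvjeq]
    -- w side
    have hwkpos : 0 < -w k := by
      by_contra hcon
      push_neg at hcon
      have hwk0 : w k = 0 := by linarith [hvkw.2]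
      have t1 : 0 < w i * (n i : ℤ) :=
        mul_pos hwipos (by exact_mod_cast hn i)
      rw [hwk0, hwj0] at hw3
      linarith
    obtain ⟨E, hE⟩ : ∃ E : ℕ, -w k = (E : ℤ) :=
      ⟨(-w k).toNat, (Int.toNat_of_nonneg (by linarith)).symm⟩
    have hEeq : E * n k = A * n i := by
      have hZ : (E : ℤ) * n k = A * n i := by
        rw [← hE, ← hA]
        rw [hwj0] at hw3
        linarith
      exact_mod_cast hZ
    have hEpos : 0 < E := by
      have : (0 : ℤ) < (E : ℤ) := by rw [← hE]; exact hwkpos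
      exact_mod_cast this
    have hj'E : j' ≤ E := by
      have := hck.2.2 E hEpos ⟨A, 0, by rw [hEeq]; ring⟩
      omega
    have hEle : E ≤ j' := by
      have h1 : v k + w k = -(j' : ℤ) := by rw [← hDl k, huk]
      have h2 : (E : ℤ) ≤ (j' : ℤ) := by
        rw [← hE]
        linarith [hvkw.1]
      exact_mod_cast h2
    have hEj' : E = j' := le_antisymm hEle hj'E
    have hAnat : A * n i = k' * n j := by
      rw [← hEeq, hEj']
      calc j' * n k = j' * (G * k') := by rw [hk']
      _ = k' * (G * j') := by ring
      _ = k' * n j := by rw [hj']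
    exact keyNat (n i) (n j) (n k) (G) j' k' ci A (hn i) hg hj' hk' hj'0 hk'0
      hco hci
      (fun c' h1 h2 => by rw [← hcje]; exact hcj.2.2 c' h1 h2)
      (fun c' h1 h2 => by rw [← hcke]; exact hck.2.2 c' h1 h2)
      hAnat
      (by rw [← hcje]; exact hCI.2)
end

section
/- Let T = (n_1,...,n_s) be positive integers, s ≥ 3, and let i, j, k be distinct indices with gcd(n_i,n_j,n_k)=1. For each l ∈ {i,j,k} let c_l be the least positive integer with c_l·n_l in the semigroup generated by the other two. Suppose (n_i, n_j, n_k) is NOT a complete intersection on n_i (i.e., it is not the case that c_j·n_j = c_k·n_k ≠ c_i·n_i). Let u ∈ Ker_Z(T) be the circuit with support {j,k} (u_j = n_k/gcd(n_j,n_k), u_k = -n_j/gcd(n_j,n_k)). Then D(u) = (u, -[u]^i) admits a proper semiconformal decomposition D(u) = D(v) + D(w) with nonzero v, w ∈ Ker_Z(T). -/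
open BigOperators

lemma core (ni nj nk a b ci cj ck : ℕ)
    (hni : 0 < ni) (hnj : 0 < nj) (hnk : 0 < nk)
    (ha : 0 < a) (hb : 0 < b)
    (hab : a * nj = b * nk)
    (hcop : Nat.Coprime a b)
    (hci : IsLeastC nj nk ni ci)
    (hcj : IsLeastC nk ni nj cj)
    (hck : IsLeastC ni nj nk ck)
    (hnCI : ¬ (cj * nj = ck * nk ∧ cj * nj ≠ ci * ni)) :
    ∃ t P Q : ℤ, 1 ≤ t ∧ 0 ≤ P ∧ P ≤ (a : ℤ) ∧ 0 ≤ Q ∧ Q ≤ (b : ℤ) ∧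
      P * (nj : ℤ) = t * (ni : ℤ) + Q * (nk : ℤ) := by
  have hcja : cj ≤ a := hcj.2.2 a ha ⟨b, 0, by rw [hab]; ring⟩
  have hckb : ck ≤ b := hck.2.2 b hb ⟨0, a, by rw [← hab]; ring⟩
  obtain ⟨γ, α, h1⟩ := hcj.2.1
  obtain ⟨δ, ε, h2⟩ := hck.2.1
  have hZab : (a : ℤ) * nj = (b : ℤ) * nk := by exact_mod_cast hab
  have hZ1 : (cj : ℤ) * nj = (γ : ℤ) * nk + (α : ℤ) * ni := by exact_mod_cast h1
  have hZ2 : (ck : ℤ) * nk = (δ : ℤ) * ni + (ε : ℤ) * nj := by exact_mod_cast h2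
  have hZni : (1 : ℤ) ≤ ni := by exact_mod_cast hni
  have hZnj : (1 : ℤ) ≤ nj := by exact_mod_cast hnj
  have hZnk : (1 : ℤ) ≤ nk := by exact_mod_cast hnk
  rcases Nat.eq_zero_or_pos α with hα | hα
  · rcases Nat.eq_zero_or_pos δ with hδ | hδ
    · -- both zero: cj = a, ck = b, lcm case
      subst hα; subst hδ
      simp only [Nat.cast_zero, zero_mul, add_zero, zero_add] at hZ1 hZ2
      have h1' : cj * nj = γ * nk := by
        simpa using h1
      have h2' : ck * nk = ε * nj := by
        simpa using h2
      have hacj : a ∣ cj := by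
        have h3 : cj * b * nk = γ * a * nk := by
          calc cj * b * nk = cj * (b * nk) := by ring
            _ = cj * (a * nj) := by rw [hab]
            _ = (cj * nj) * a := by ring
            _ = (γ * nk) * a := by rw [h1']
            _ = γ * a * nk := by ring
        have h4 : cj * b = γ * a := Nat.eq_of_mul_eq_mul_right hnk h3
        have h5 : a ∣ cj * b := h4 ▸ dvd_mul_left a γ
        exact hcop.dvd_of_dvd_mul_right h5
      have hbck : b ∣ ck := by
        have h3 : ck * a * nj = ε * b * nj := by
          calc ck * a * nj = ck * (a * nj) := by ring
            _ = ck * (b * nk) := by rw [hab]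
            _ = (ck * nk) * b := by ring
            _ = (ε * nj) * b := by rw [h2']
            _ = ε * b * nj := by ring
        have h4 : ck * a = ε * b := Nat.eq_of_mul_eq_mul_right hnj h3
        have h5 : b ∣ ck * a := h4 ▸ dvd_mul_left b ε
        exact hcop.symm.dvd_of_dvd_mul_right h5
      have hcjeq : cj = a := le_antisymm hcja (Nat.le_of_dvd hcj.1 hacj)
      have hckeq : ck = b := le_antisymm hckb (Nat.le_of_dvd hck.1 hbck)
      have heqjk : cj * nj = ck * nk := by rw [hcjeq, hckeq, hab]
      have heqi : cj * nj = ci * ni := by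
        by_contra h
        exact hnCI ⟨heqjk, h⟩
      have hAni : a * nj = ci * ni := by rw [← hcjeq]; exact heqi
      refine ⟨(ci : ℤ), (a : ℤ), 0, ?_, by positivity, le_refl _, le_refl _,
        by positivity, ?_⟩
      · exact_mod_cast hci.1
      · have : (a : ℤ) * nj = (ci : ℤ) * ni := by exact_mod_cast hAni
        linarith
    · -- δ ≥ 1 : option B
      have hZδ : (1 : ℤ) ≤ δ := by exact_mod_cast hδ
      have hZck : (ck : ℤ) ≤ b := by exact_mod_cast hckb
      have hε : (ε : ℤ) < a := by
        have h6 : (ε : ℤ) * nj < (a : ℤ) * nj := by nlinarith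
        exact lt_of_mul_lt_mul_right h6 (by positivity)
      refine ⟨(δ : ℤ), (a : ℤ) - ε, (b : ℤ) - ck, hZδ, by linarith,
        sub_le_self _ (by positivity), by linarith,
        sub_le_self _ (by positivity), by linear_combination hZab + hZ2⟩
  · -- α ≥ 1 : option A
    have hZα : (1 : ℤ) ≤ α := by exact_mod_cast hα
    have hZcj : (cj : ℤ) ≤ a := by exact_mod_cast hcja
    have hγ : (γ : ℤ) < b := by
      have h6 : (γ : ℤ) * nk < (b : ℤ) * nk := by nlinarith
      exact lt_of_mul_lt_mul_right h6 (by positivity)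
    refine ⟨(α : ℤ), (cj : ℤ), (γ : ℤ), hZα, by positivity, hZcj,
      by positivity, by linarith, by linear_combination hZ1⟩

lemma sum_three {s : ℕ} (i j k : Fin s) (hij : i ≠ j) (hik : i ≠ k) (hjk : j ≠ k)
    (f : Fin s → ℤ) (h : ∀ l, l ≠ i → l ≠ j → l ≠ k → f l = 0) :
    ∑ l, f l = f i + f j + f k := by
  classical
  rw [← Finset.sum_subset (Finset.subset_univ ({i, j, k} : Finset (Fin s)))]
  · rw [Finset.sum_insert (by simp [hij, hik]), Finset.sum_insert (by simp [hjk]),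
      Finset.sum_singleton, add_assoc]
  · intro x _ hx
    simp only [Finset.mem_insert, Finset.mem_singleton, not_or] at hx
    exact h x hx.1 hx.2.1 hx.2.2

/-- If `(n_i, n_j, n_k)` is not a complete intersection on `n_i`, then the circuit with
support `{j, k}` is not indispensable in `Λ(T)_{i}`. -/
theorem stmt12 {s : ℕ} (hs : 3 ≤ s) (n : Fin s → ℕ) (hn : ∀ l, 0 < n l)
    (i j k : Fin s) (hij : i ≠ j) (hik : i ≠ k) (hjk : j ≠ k)
    (hg : Nat.gcd (n i) (Nat.gcd (n j) (n k)) = 1)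
    (ci cj ck : ℕ)
    (hci : IsLeastC (n j) (n k) (n i) ci)
    (hcj : IsLeastC (n k) (n i) (n j) cj)
    (hck : IsLeastC (n i) (n j) (n k) ck)
    (hnCI : ¬ (cj * n j = ck * n k ∧ cj * n j ≠ ci * n i))
    (u : Fin s → ℤ)
    (huj : u j = ((n k / Nat.gcd (n j) (n k) : ℕ) : ℤ))
    (huk : u k = -((n j / Nat.gcd (n j) (n k) : ℕ) : ℤ))
    (hu0 : ∀ l, l ≠ j → l ≠ k → u l = 0) :
    ∃ v w : Fin s → ℤ,
      (∑ l, v l * (n l : ℤ) = 0) ∧ (∑ l, w l * (n l : ℤ) = 0) ∧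
      v ≠ 0 ∧ w ≠ 0 ∧
      Dmap i u = Dmap i v + Dmap i w ∧ SemiConf (Dmap i v) (Dmap i w) := by
  classical
  set d := Nat.gcd (n j) (n k) with hdDef
  have hd : 0 < d := Nat.gcd_pos_of_pos_left _ (hn j)
  have hdj : d ∣ n j := Nat.gcd_dvd_left _ _
  have hdk : d ∣ n k := Nat.gcd_dvd_right _ _
  set a := n k / d with haDef
  set b := n j / d with hbDef
  have ha : 0 < a := Nat.div_pos (Nat.le_of_dvd (hn k) hdk) hd
  have hb : 0 < b := Nat.div_pos (Nat.le_of_dvd (hn j) hdj) hd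
  have hab : a * n j = b * n k := by
    obtain ⟨b', hb'⟩ := hdj
    obtain ⟨a', ha'⟩ := hdk
    simp only [haDef, hbDef, ha', hb', Nat.mul_div_cancel_left _ hd]
    ring
  have hcop : Nat.Coprime a b := (Nat.coprime_div_gcd_div_gcd hd).symm
  obtain ⟨t, P, Q, ht, hP0, hPa, hQ0, hQb, heq⟩ :=
    core (n i) (n j) (n k) a b ci cj ck (hn i) (hn j) (hn k) ha hb hab hcop hci hcj hck hnCI
  have hZab : (a : ℤ) * n j = (b : ℤ) * n k := by exact_mod_cast hab
  set v : Fin s → ℤ := fun l => if l = i then -t else if l = j then P else if l = k then -Q else 0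
    with hvDef
  set w : Fin s → ℤ :=
      fun l => if l = i then t else if l = j then (a : ℤ) - P else if l = k then Q - b else 0
    with hwDef
  have hvi : v i = -t := by simp [hvDef]
  have hvj : v j = P := by simp [hvDef, Ne.symm hij]
  have hvk : v k = -Q := by simp [hvDef, Ne.symm hik, Ne.symm hjk]
  have hwi : w i = t := by simp [hwDef]
  have hwj : w j = (a : ℤ) - P := by simp [hwDef, Ne.symm hij]
  have hwk : w k = Q - (b : ℤ) := by simp [hwDef, Ne.symm hik, Ne.symm hjk]
  have hv0 : ∀ l, l ≠ i → l ≠ j → l ≠ k → v l = 0 := by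
    intro l h1 h2 h3; simp [hvDef, h1, h2, h3]
  have hw0 : ∀ l, l ≠ i → l ≠ j → l ≠ k → w l = 0 := by
    intro l h1 h2 h3; simp [hwDef, h1, h2, h3]
  refine ⟨v, w, ?_, ?_, ?_, ?_, ?_, ?_⟩
  · rw [sum_three i j k hij hik hjk _ (fun l h1 h2 h3 => by rw [hv0 l h1 h2 h3, zero_mul])]
    rw [hvi, hvj, hvk]; linarith
  · rw [sum_three i j k hij hik hjk _ (fun l h1 h2 h3 => by rw [hw0 l h1 h2 h3, zero_mul])]
    rw [hwi, hwj, hwk]; linarith [heq, hZab]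
  · intro h
    have := congrFun h i
    rw [hvi] at this
    simp only [Pi.zero_apply] at this
    omega
  · intro h
    have := congrFun h i
    rw [hwi] at this
    simp only [Pi.zero_apply] at this
    omega
  · have huvw : ∀ l, u l = v l + w l := by
      intro l
      by_cases h1 : l = i
      · subst h1; rw [hvi, hwi, hu0 _ hij hik]; ring
      · by_cases h2 : l = j
        · subst h2; rw [hvj, hwj, huj]; ring
        · by_cases h3 : l = k
          · subst h3; rw [hvk, hwk, huk]; ring
          · rw [hv0 l h1 h2 h3, hw0 l h1 h2 h3, hu0 l h2 h3]; ring
    funext x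
    rcases x with l | ⟨l, hl⟩
    · simpa [Dmap] using huvw l
    · simp only [Dmap, Sum.elim_inr, Pi.add_apply]
      rw [huvw l]; ring
  · have Hsign1 : ∀ l, v l ≤ 0 ∨ (0 ≤ v l ∧ 0 ≤ w l) := by
      intro l
      by_cases h1 : l = i
      · subst h1; rw [hvi]; left; linarith
      · by_cases h2 : l = j
        · subst h2; rw [hvj, hwj]; right; exact ⟨hP0, by linarith⟩
        · by_cases h3 : l = k
          · subst h3; rw [hvk]; left; linarith
          · rw [hv0 l h1 h2 h3]; left; exact le_refl 0
    have Hsign2 : ∀ l, l ≠ i → (0 ≤ v l ∧ 0 ≤ w l) ∨ (v l ≤ 0 ∧ w l ≤ 0) := by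
      intro l h1
      by_cases h2 : l = j
      · subst h2; rw [hvj, hwj]; left; exact ⟨hP0, by linarith⟩
      · by_cases h3 : l = k
        · subst h3; rw [hvk, hwk]; right; exact ⟨by linarith, by linarith⟩
        · rw [hv0 l h1 h2 h3, hw0 l h1 h2 h3]; left; exact ⟨le_refl 0, le_refl 0⟩
    intro x
    rcases x with l | ⟨l, hl⟩
    · simp only [Dmap, Sum.elim_inl]
      rcases Hsign1 l with h | h
      · exact ⟨fun hp => absurd hp (not_lt.mpr h), fun _ => h⟩
      · exact ⟨fun _ => h.2, fun hw' => absurd hw' (not_lt.mpr h.2)⟩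
    · simp only [Dmap, Sum.elim_inr]
      rcases Hsign2 l hl with h | h
      · exact ⟨fun hp => by linarith [h.1], fun hw' => by linarith [h.1]⟩
      · exact ⟨fun hp => by linarith [h.2], fun hw' => by linarith [h.2]⟩
end

section
/- Let T = (n_1,...,n_s) be positive integers with s ≥ 3 and gcd equal to 1. For each i, define D_i: Ker_Z(T) → Z^{2s-1} by D_i(u) = (u, -[u]^i) where [u]^i deletes the i-th coordinate, and let L_i = {D_i(u) : u ∈ Ker_Z(T)}. Then there is at most one index i ∈ {1,...,s} such that L_i is strongly robust (i.e., such that every Graver basis element of L_i is indispensable in L_i). -/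
open BigOperators

/-- Membership in `Ker_Z(T)`. -/
def InKer {s : ℕ} (n : Fin s → ℕ) (u : Fin s → ℤ) : Prop :=
  ∑ l, u l * (n l : ℤ) = 0

/-- Conformality of a decomposition `x = y + z`. -/
def Conf {ι : Type*} (x y z : ι → ℤ) : Prop :=
  x = y + z ∧ ∀ l, max (x l) 0 = max (y l) 0 + max (z l) 0 ∧
    max (-(x l)) 0 = max (-(y l)) 0 + max (-(z l)) 0

/-- The lattice `L_i = {D_i(u) : u ∈ Ker_Z(T)}` is strongly robust: every Graver basis
element of `L_i` is indispensable in `L_i`. -/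
def StronglyRobustAt {s : ℕ} (n : Fin s → ℕ) (i : Fin s) : Prop :=
  ∀ u : Fin s → ℤ, InKer n u → u ≠ 0 →
    (¬ ∃ v w : Fin s → ℤ, InKer n v ∧ InKer n w ∧ v ≠ 0 ∧ w ≠ 0 ∧
      Conf (Dmap i u) (Dmap i v) (Dmap i w)) →
    ¬ ∃ v w : Fin s → ℤ, InKer n v ∧ InKer n w ∧ v ≠ 0 ∧ w ≠ 0 ∧
      Dmap i u = Dmap i v + Dmap i w ∧ SemiConf (Dmap i v) (Dmap i w)

lemma sum_two {s : ℕ} (f : Fin s → ℤ) (j k : Fin s) (hjk : j ≠ k)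
    (h : ∀ l, l ≠ j → l ≠ k → f l = 0) : ∑ l, f l = f j + f k := by
  classical
  have hsub := Finset.sum_subset (Finset.subset_univ ({j, k} : Finset (Fin s)))
    (f := f)
    (fun x _ hx => by
      simp only [Finset.mem_insert, Finset.mem_singleton] at hx
      push_neg at hx
      exact h x hx.1 hx.2)
  rw [← hsub, Finset.sum_pair hjk]

lemma key {s : ℕ} (n : Fin s → ℕ) (hn : ∀ l, 0 < n l) (i j k : Fin s)
    (hji : j ≠ i) (hki : k ≠ i) (hjk : j ≠ k) (hi : StronglyRobustAt n i) :
    n k * Nat.gcd (n i) (n j) < n i * Nat.gcd (n j) (n k) := by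
  by_contra hle
  push_neg at hle
  classical
  obtain ⟨g, hgdef⟩ : ∃ g, g = Nat.gcd (n j) (n k) := ⟨_, rfl⟩
  obtain ⟨d, hddef⟩ : ∃ d, d = Nat.gcd (n i) (n j) := ⟨_, rfl⟩
  have hg0 : 0 < g := hgdef ▸ Nat.gcd_pos_of_pos_left _ (hn j)
  have hd0 : 0 < d := hddef ▸ Nat.gcd_pos_of_pos_left _ (hn i)
  obtain ⟨a, hadef⟩ : ∃ a, a = n k / g := ⟨_, rfl⟩
  obtain ⟨b, hbdef⟩ : ∃ b, b = n j / g := ⟨_, rfl⟩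
  obtain ⟨m, hmdef⟩ : ∃ m, m = n j / d := ⟨_, rfl⟩
  obtain ⟨x, hxdef⟩ : ∃ x, x = n i / d := ⟨_, rfl⟩
  have hgk : g ∣ n k := hgdef ▸ Nat.gcd_dvd_right _ _
  have hgj : g ∣ n j := hgdef ▸ Nat.gcd_dvd_left _ _
  have hdi : d ∣ n i := hddef ▸ Nat.gcd_dvd_left _ _
  have hdj : d ∣ n j := hddef ▸ Nat.gcd_dvd_right _ _
  have ha : a * g = n k := hadef ▸ Nat.div_mul_cancel hgk
  have hb : b * g = n j := hbdef ▸ Nat.div_mul_cancel hgj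
  have hm : m * d = n j := hmdef ▸ Nat.div_mul_cancel hdj
  have hx : x * d = n i := hxdef ▸ Nat.div_mul_cancel hdi
  have ha0 : 0 < a := hadef ▸ Nat.div_pos (Nat.le_of_dvd (hn k) hgk) hg0
  have hb0 : 0 < b := hbdef ▸ Nat.div_pos (Nat.le_of_dvd (hn j) hgj) hg0
  have hm0 : 0 < m := hmdef ▸ Nat.div_pos (Nat.le_of_dvd (hn j) hdj) hd0
  have hx0 : 0 < x := hxdef ▸ Nat.div_pos (Nat.le_of_dvd (hn i) hdi) hd0
  have hle' : n i * g ≤ n k * d := by rw [hgdef, hddef]; exact hle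
  have hxa : x ≤ a := by
    have h1 : x * (d * g) ≤ a * (d * g) := by
      calc x * (d * g) = (x * d) * g := by ring
      _ = n i * g := by rw [hx]
      _ ≤ n k * d := hle'
      _ = (a * g) * d := by rw [ha]
      _ = a * (d * g) := by ring
    exact Nat.le_of_mul_le_mul_right h1 (Nat.mul_pos hd0 hg0)
  have hnj : (n j : ℤ) = (b : ℤ) * (g : ℤ) := by exact_mod_cast hb.symm
  have hnk : (n k : ℤ) = (a : ℤ) * (g : ℤ) := by exact_mod_cast ha.symm
  have hnj' : (n j : ℤ) = (m : ℤ) * (d : ℤ) := by exact_mod_cast hm.symm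
  have hni : (n i : ℤ) = (x : ℤ) * (d : ℤ) := by exact_mod_cast hx.symm
  obtain ⟨u, hudef⟩ : ∃ u : Fin s → ℤ,
      ∀ l, u l = if l = j then (a : ℤ) else if l = k then -(b : ℤ) else 0 :=
    ⟨_, fun _ => rfl⟩
  obtain ⟨v, hvdef⟩ : ∃ v : Fin s → ℤ,
      ∀ l, v l = if l = i then -(m : ℤ) else if l = j then (x : ℤ) else 0 :=
    ⟨_, fun _ => rfl⟩
  obtain ⟨w, hwdef⟩ : ∃ w : Fin s → ℤ, ∀ l, w l = u l - v l := ⟨_, fun _ => rfl⟩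
  have huj : u j = (a : ℤ) := by rw [hudef]; simp
  have huk : u k = -(b : ℤ) := by rw [hudef]; simp [Ne.symm hjk]
  have hu_other : ∀ l, l ≠ j → l ≠ k → u l = 0 := by
    intro l h1 h2; rw [hudef]; simp [h1, h2]
  have hvi : v i = -(m : ℤ) := by rw [hvdef]; simp
  have hvj : v j = (x : ℤ) := by rw [hvdef]; simp [hji]
  have hv_other : ∀ l, l ≠ i → l ≠ j → v l = 0 := by
    intro l h1 h2; rw [hvdef]; simp [h1, h2]
  have hvk : v k = 0 := hv_other k hki (Ne.symm hjk)
  have hui : u i = 0 := hu_other i (Ne.symm hji) (Ne.symm hki)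
  have hkeru : InKer n u := by
    unfold InKer
    rw [sum_two (fun l => u l * (n l : ℤ)) j k hjk
      (fun l h1 h2 => by simp only [hu_other l h1 h2, zero_mul])]
    show u j * (n j : ℤ) + u k * (n k : ℤ) = 0
    rw [huj, huk, hnj, hnk]; ring
  have hkerv : InKer n v := by
    unfold InKer
    rw [sum_two (fun l => v l * (n l : ℤ)) i j (Ne.symm hji)
      (fun l h1 h2 => by simp only [hv_other l h1 h2, zero_mul])]
    show v i * (n i : ℤ) + v j * (n j : ℤ) = 0
    rw [hvi, hvj, hni, hnj']; ring
  have hkerw : InKer n w := by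
    unfold InKer
    have e : ∑ l, w l * (n l : ℤ) = (∑ l, u l * (n l : ℤ)) - ∑ l, v l * (n l : ℤ) := by
      rw [← Finset.sum_sub_distrib]
      exact Finset.sum_congr rfl (fun l _ => by rw [hwdef]; ring)
    rw [e, hkeru, hkerv]; ring
  have haz : (0 : ℤ) < (a : ℤ) := by exact_mod_cast ha0
  have hbz : (0 : ℤ) < (b : ℤ) := by exact_mod_cast hb0
  have hmz : (0 : ℤ) < (m : ℤ) := by exact_mod_cast hm0
  have hxz : (0 : ℤ) < (x : ℤ) := by exact_mod_cast hx0
  have hxaz : (x : ℤ) ≤ (a : ℤ) := by exact_mod_cast hxa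
  have hu0 : u ≠ 0 := by
    intro h
    have := congrFun h j
    rw [huj] at this
    simp only [Pi.zero_apply] at this
    omega
  have hv0 : v ≠ 0 := by
    intro h
    have := congrFun h i
    rw [hvi] at this
    simp only [Pi.zero_apply] at this
    omega
  have hw0 : w ≠ 0 := by
    intro h
    have := congrFun h i
    rw [hwdef, hui, hvi] at this
    simp only [Pi.zero_apply] at this
    omega
  -- u is a Graver element: no conformal decomposition
  have hgraver : ¬ ∃ v' w' : Fin s → ℤ, InKer n v' ∧ InKer n w' ∧ v' ≠ 0 ∧ w' ≠ 0 ∧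
      Conf (Dmap i u) (Dmap i v') (Dmap i w') := by
    rintro ⟨v', w', hkv', hkw', hv'0, hw'0, heq, hmax⟩
    have hco : ∀ l, u l = v' l + w' l ∧ max (u l) 0 = max (v' l) 0 + max (w' l) 0 ∧
        max (-(u l)) 0 = max (-(v' l)) 0 + max (-(w' l)) 0 := by
      intro l
      refine ⟨?_, hmax (Sum.inl l)⟩
      have := congrFun heq (Sum.inl l)
      simpa [Dmap] using this
    have hzero : ∀ l, l ≠ j → l ≠ k → v' l = 0 ∧ w' l = 0 := by
      intro l h1 h2
      obtain ⟨e1, e2, e3⟩ := hco l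
      rw [hu_other l h1 h2] at e1 e2 e3
      constructor <;> omega
    have hvj' : 0 ≤ v' j ∧ 0 ≤ w' j ∧ v' j + w' j = (a : ℤ) := by
      obtain ⟨e1, e2, e3⟩ := hco j
      rw [huj] at e1 e2 e3
      refine ⟨by omega, by omega, by omega⟩
    have hsumv : v' j * (n j : ℤ) + v' k * (n k : ℤ) = 0 := by
      have hh := hkv'
      unfold InKer at hh
      rw [sum_two (fun l => v' l * (n l : ℤ)) j k hjk
        (fun l h1 h2 => by simp only [(hzero l h1 h2).1, zero_mul])] at hh
      exact hh
    have hsumw : w' j * (n j : ℤ) + w' k * (n k : ℤ) = 0 := by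
      have hh := hkw'
      unfold InKer at hh
      rw [sum_two (fun l => w' l * (n l : ℤ)) j k hjk
        (fun l h1 h2 => by simp only [(hzero l h1 h2).2, zero_mul])] at hh
      exact hh
    have hnjz : (0 : ℤ) < (n j : ℤ) := by exact_mod_cast hn j
    have hnkz : (0 : ℤ) < (n k : ℤ) := by exact_mod_cast hn k
    have hcop : IsCoprime ((a : ℤ)) ((b : ℤ)) := by
      have h1 : Nat.Coprime b a := by
        rw [hbdef, hadef, hgdef]
        exact Nat.coprime_div_gcd_div_gcd (hgdef ▸ hg0)
      have h2 : Nat.Coprime a b := h1.symm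
      rw [Int.isCoprime_iff_gcd_eq_one]
      simpa [Int.gcd_natCast_natCast] using h2
    have hdvd : (a : ℤ) ∣ v' j := by
      apply hcop.dvd_of_dvd_mul_right
      refine ⟨-(v' k), ?_⟩
      have hgz : (g : ℤ) ≠ 0 := by positivity
      have e2 : (v' j * (b : ℤ)) * (g : ℤ) = (-(v' k) * (a : ℤ)) * (g : ℤ) := by
        have e : v' j * ((b : ℤ) * g) = -(v' k) * ((a : ℤ) * g) := by
          rw [← hnj, ← hnk]; linarith [hsumv]
        calc (v' j * (b : ℤ)) * (g : ℤ) = v' j * ((b : ℤ) * g) := by ring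
        _ = -(v' k) * ((a : ℤ) * g) := e
        _ = (-(v' k) * (a : ℤ)) * (g : ℤ) := by ring
      have := mul_right_cancel₀ hgz e2
      linarith [this]
    obtain ⟨t, ht⟩ := hdvd
    have ht01 : t = 0 ∨ t = 1 := by
      obtain ⟨e1, e2, e3⟩ := hvj'
      have hvja2 : v' j ≤ (a : ℤ) := by linarith
      rcases lt_trichotomy t 0 with h | h | h
      · exfalso
        have h1 : t ≤ -1 := by omega
        have h2 : (a : ℤ) * t ≤ (a : ℤ) * (-1) := by
          exact mul_le_mul_of_nonneg_left h1 (le_of_lt haz)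
        rw [ht] at e1
        linarith
      · left; exact h
      · right
        by_contra hne2
        have h1 : (2 : ℤ) ≤ t := by omega
        have h2 : (a : ℤ) * 2 ≤ (a : ℤ) * t := mul_le_mul_of_nonneg_left h1 (le_of_lt haz)
        rw [ht] at hvja2
        linarith
    rcases ht01 with h | h
    · -- v' = 0
      have hvj0 : v' j = 0 := by rw [ht, h, mul_zero]
      have hvk0 : v' k = 0 := by
        rw [hvj0, zero_mul, zero_add] at hsumv
        exact (mul_eq_zero.mp hsumv).resolve_right (by omega)
      apply hv'0
      funext l
      by_cases h1 : l = j
      · rw [h1, hvj0]; rfl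
      by_cases h2 : l = k
      · rw [h2, hvk0]; rfl
      · exact (hzero l h1 h2).1
    · -- w' = 0
      have hvja : v' j = (a : ℤ) := by rw [ht, h, mul_one]
      have hwj0 : w' j = 0 := by
        obtain ⟨e1, e2, e3⟩ := hvj'
        omega
      have hwk0 : w' k = 0 := by
        rw [hwj0, zero_mul, zero_add] at hsumw
        exact (mul_eq_zero.mp hsumw).resolve_right (by omega)
      apply hw'0
      funext l
      by_cases h1 : l = j
      · rw [h1, hwj0]; rfl
      by_cases h2 : l = k
      · rw [h2, hwk0]; rfl
      · exact (hzero l h1 h2).2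
  -- but u has a semiconformal decomposition: contradiction
  apply hi u hkeru hu0 hgraver
  refine ⟨v, w, hkerv, hkerw, hv0, hw0, ?_, ?_⟩
  · funext c
    rcases c with l | ⟨l, hl⟩
    · show u l = v l + w l
      rw [hwdef]; ring
    · show -(u l) = -(v l) + -(w l)
      rw [hwdef]; ring
  · rintro (l | ⟨l, hl⟩)
    · show (0 < v l → 0 ≤ w l) ∧ (w l < 0 → v l ≤ 0)
      rw [hwdef]
      by_cases h1 : l = i
      · subst h1; rw [hvi, hui]
        constructor <;> intro <;> omega
      by_cases h2 : l = j
      · subst h2; rw [hvj, huj]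
        constructor <;> intro <;> omega
      by_cases h3 : l = k
      · subst h3; rw [hvk, huk]
        constructor <;> intro <;> omega
      · rw [hv_other l h1 h2, hu_other l h2 h3]
        constructor <;> intro <;> omega
    · show (0 < -(v l) → 0 ≤ -(w l)) ∧ (-(w l) < 0 → -(v l) ≤ 0)
      rw [hwdef]
      by_cases h2 : l = j
      · subst h2; rw [hvj, huj]
        constructor <;> intro <;> omega
      by_cases h3 : l = k
      · subst h3; rw [hvk, huk]
        constructor <;> intro <;> omega
      · rw [hv_other l hl h2, hu_other l h2 h3]
        constructor <;> intro <;> omega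

/-- There is at most one index `i` such that `L_i` is strongly robust. -/
theorem stmt17 {s : ℕ} (hs : 3 ≤ s) (n : Fin s → ℕ) (hn : ∀ l, 0 < n l)
    (hg : Finset.univ.gcd n = 1) :
    ∀ i i' : Fin s, StronglyRobustAt n i → StronglyRobustAt n i' → i = i' := by
  intro i i' hi hi'
  by_contra hne
  obtain ⟨k, hki, hki'⟩ : ∃ k : Fin s, k ≠ i ∧ k ≠ i' := by
    by_contra hk
    push_neg at hk
    have hsub : (Finset.univ : Finset (Fin s)) ⊆ {i, i'} := by
      intro z _
      simp only [Finset.mem_insert, Finset.mem_singleton]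
      rcases eq_or_ne z i with h | h
      · exact Or.inl h
      · exact Or.inr (hk z h)
    have hc := Finset.card_le_card hsub
    have h2 : ({i, i'} : Finset (Fin s)).card ≤ 2 := by
      apply le_trans (Finset.card_insert_le _ _)
      simp
    rw [Finset.card_univ, Fintype.card_fin] at hc
    omega
  have h1 := key n hn i k i' hki (Ne.symm hne) hki' hi
  have h2 := key n hn i' k i hki' hne hki hi'
  rw [Nat.gcd_comm (n i) (n k)] at h1
  rw [Nat.gcd_comm (n i') (n k)] at h2
  omega
end

section
/- Let T = (n_1,...,n_s) be positive integers, s ≥ 3, fix i, and let Gr(T) denote the Graver basis of Ker_Z(T) (nonzero kernel elements with no proper conformal decomposition). Let Gr(T)^i = {[u]^i : u ∈ Gr(T)} ⊆ Z^{s-1}, where [u]^i deletes the i-th coordinate. For u ∈ Gr(T), the vector D(u) = (u, -[u]^i) is indispensable in the lattice {D(v) : v ∈ Ker_Z(T)} if and only if [u]^i is primitive in Gr(T)^i, i.e., there is no v ∈ Gr(T) with [v]^i ≠ [u]^i such that ([v]^i)^+ ≤ ([u]^i)^+ and ([v]^i)^- ≤ ([u]^i)^- componentwise. -/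
open BigOperators

def InGraver {s : ℕ} (n : Fin s → ℕ) (u : Fin s → ℤ) : Prop :=
  InKer n u ∧ u ≠ 0 ∧
    ¬ ∃ v w : Fin s → ℤ, InKer n v ∧ InKer n w ∧ v ≠ 0 ∧ w ≠ 0 ∧ Conf u v w

def drop {s : ℕ} (i : Fin s) (u : Fin s → ℤ) : {l : Fin s // l ≠ i} → ℤ :=
  fun l => u l.1

lemma ker_sub {s : ℕ} {n : Fin s → ℕ} {u v : Fin s → ℤ} (hu : InKer n u) (hv : InKer n v) :
    InKer n (u - v) := by
  unfold InKer at *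
  have h : ∑ l, (u l - v l) * (n l : ℤ) = (∑ l, u l * (n l : ℤ)) - ∑ l, v l * (n l : ℤ) := by
    rw [← Finset.sum_sub_distrib]; congr 1; funext l; ring
  show ∑ l, (u l - v l) * (n l : ℤ) = 0
  rw [h, hu, hv]; ring

lemma exists_graver_le {s : ℕ} (n : Fin s → ℕ) :
    ∀ N : ℕ, ∀ v : Fin s → ℤ, (∑ l, (v l).natAbs) ≤ N → InKer n v → v ≠ 0 →
    ∃ g : Fin s → ℤ, InGraver n g ∧ (∀ l, max (g l) 0 ≤ max (v l) 0) ∧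
      (∀ l, max (-(g l)) 0 ≤ max (-(v l)) 0) := by
  intro N
  induction N with
  | zero =>
    intro v hN hK hne
    exfalso; apply hne; funext l
    have h0 : ∑ l, (v l).natAbs = 0 := Nat.le_zero.mp hN
    have := Finset.sum_eq_zero_iff.mp h0 l (Finset.mem_univ l)
    simpa using Int.natAbs_eq_zero.mp this
  | succ N ih =>
    intro v hN hK hne
    by_cases hg : InGraver n v
    · exact ⟨v, hg, fun l => le_refl _, fun l => le_refl _⟩
    · have hdec : ∃ a b : Fin s → ℤ, InKer n a ∧ InKer n b ∧ a ≠ 0 ∧ b ≠ 0 ∧ Conf v a b := by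
        unfold InGraver at hg
        push_neg at hg
        exact hg hK hne
      obtain ⟨a, b, hKa, hKb, ha0, hb0, heq, hml⟩ := hdec
      have habs : ∀ l, (v l).natAbs = (a l).natAbs + (b l).natAbs := by
        intro l; have h1 := (hml l).1; have h2 := (hml l).2; omega
      have hsum : (∑ l, (a l).natAbs) < ∑ l, (v l).natAbs := by
        obtain ⟨l0, hl0⟩ : ∃ l, b l ≠ 0 := by
          by_contra h; push_neg at h; exact hb0 (funext h)
        apply Finset.sum_lt_sum (fun l _ => by have := habs l; omega)
        refine ⟨l0, Finset.mem_univ _, ?_⟩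
        have := habs l0
        have hb : (b l0).natAbs ≠ 0 := Int.natAbs_ne_zero.mpr hl0
        omega
      obtain ⟨g, hg', hp, hm⟩ := ih a (by omega) hKa ha0
      refine ⟨g, hg', fun l => ?_, fun l => ?_⟩
      · have h1 := (hml l).1
        have h2 : (0:ℤ) ≤ max (b l) 0 := le_max_right _ _
        have := hp l; omega
      · have h1 := (hml l).2
        have h2 : (0:ℤ) ≤ max (-(b l)) 0 := le_max_right _ _
        have := hm l; omega

/-- For `u ∈ Gr(T)`, `D(u)` is indispensable in `{D(v) : v ∈ Ker_Z(T)}` if and only if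
`[u]^i` is primitive in `Gr(T)^i`. -/
theorem stmt18 {s : ℕ} (hs : 3 ≤ s) (n : Fin s → ℕ) (hn : ∀ l, 0 < n l)
    (i : Fin s) (u : Fin s → ℤ) (hu : InGraver n u) :
    (¬ ∃ v w : Fin s → ℤ, InKer n v ∧ InKer n w ∧ v ≠ 0 ∧ w ≠ 0 ∧
        Dmap i u = Dmap i v + Dmap i w ∧ SemiConf (Dmap i v) (Dmap i w)) ↔
    (¬ ∃ v : Fin s → ℤ, InGraver n v ∧ drop i v ≠ drop i u ∧
        (∀ l, max (drop i v l) 0 ≤ max (drop i u l) 0) ∧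
        (∀ l, max (-(drop i v l)) 0 ≤ max (-(drop i u l)) 0)) := by
  rw [not_iff_not]
  constructor
  · -- semiconformal decomposition → primitivity violation
    rintro ⟨v, w, hKv, hKw, hv0, hw0, heq, hsc⟩
    have huvw : ∀ l, u l = v l + w l := fun l => by
      have := congrFun heq (Sum.inl l); simpa [Dmap] using this
    have h1 : ∀ l, (0 < v l → 0 ≤ w l) ∧ (w l < 0 → v l ≤ 0) := fun l => hsc (Sum.inl l)
    have h2 : ∀ l, l ≠ i → (0 < -v l → 0 ≤ -w l) ∧ (-w l < 0 → -v l ≤ 0) :=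
      fun l hl => hsc (Sum.inr ⟨l, hl⟩)
    have hple : ∀ l, l ≠ i → max (v l) 0 ≤ max (u l) 0 := by
      intro l hl
      have a1 := (h1 l).1; have a2 := (h2 l hl).1; have a3 := huvw l; omega
    have hmle : ∀ l, l ≠ i → max (-(v l)) 0 ≤ max (-(u l)) 0 := by
      intro l hl
      have a1 := (h1 l).1; have a2 := (h2 l hl).1; have a3 := huvw l; omega
    have hdne : drop i v ≠ drop i u := by
      intro hdd
      apply hw0
      have hvl : ∀ l, l ≠ i → v l = u l := fun l hl => congrFun hdd ⟨l, hl⟩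
      have hwz : ∀ l, l ≠ i → w l = 0 := by
        intro l hl; have := huvw l; have := hvl l hl; omega
      have hsum : ∑ l, w l * (n l : ℤ) = w i * (n i : ℤ) := by
        apply Finset.sum_eq_single
        · intro l _ hl; rw [hwz l hl]; ring
        · intro h; exact absurd (Finset.mem_univ i) h
      have hwi : w i = 0 := by
        have hk := hKw
        unfold InKer at hk
        rw [hsum] at hk
        have hni : 0 < (n i : ℤ) := by exact_mod_cast hn i
        exact (mul_eq_zero.mp hk).resolve_right (by omega)
      funext l
      by_cases hl : l = i
      · subst hl; exact hwi
      · exact hwz l hl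
    obtain ⟨g, hgG, hgp, hgm⟩ :=
      exists_graver_le n (∑ l, (v l).natAbs) v le_rfl hKv hv0
    refine ⟨g, hgG, ?_, fun l => le_trans (hgp l.1) (hple l.1 l.2),
        fun l => le_trans (hgm l.1) (hmle l.1 l.2)⟩
    intro hgd
    apply hdne
    funext l
    obtain ⟨l, hl⟩ := l
    have hgl : g l = u l := congrFun hgd ⟨l, hl⟩
    have b1 := hgp l; have b2 := hgm l
    have b3 := hple l hl; have b4 := hmle l hl
    show v l = u l
    omega
  · -- primitivity violation → semiconformal decomposition
    rintro ⟨g, hgG, hgd, hgp, hgm⟩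
    have hKu := hu.1
    have hKw : InKer n (u - g) := ker_sub hKu hgG.1
    have hw0 : (u - g) ≠ 0 := by
      intro h
      apply hgd
      have : u = g := by funext l; have := congrFun h l; simp at this; omega
      rw [this]
    have hgc : ∀ l, l ≠ i →
        (0 < g l → 0 ≤ u l - g l) ∧ (u l - g l < 0 → g l ≤ 0) ∧
        (0 < u l - g l → 0 ≤ g l) ∧ (g l < 0 → u l - g l ≤ 0) := by
      intro l hl
      have b1 := hgp ⟨l, hl⟩; have b2 := hgm ⟨l, hl⟩
      simp only [drop] at b1 b2
      omega
    by_cases hcase : 0 < g i ∧ u i - g i < 0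
    · -- use (u - g, g)
      refine ⟨u - g, g, hKw, hgG.1, hw0, hgG.2.1, ?_, ?_⟩
      · funext x
        rcases x with l | ⟨l, hl⟩ <;> simp [Dmap] <;> ring
      · rintro (l | ⟨l, hl⟩)
        · by_cases hl : l = i
          · subst hl; simp only [Dmap, Sum.elim_inl, Pi.sub_apply]; omega
          · have := hgc l hl; simp only [Dmap, Sum.elim_inl, Pi.sub_apply]; omega
        · have := hgc l hl; simp only [Dmap, Sum.elim_inr, Pi.sub_apply]; omega
    · -- use (g, u - g)
      refine ⟨g, u - g, hgG.1, hKw, hgG.2.1, hw0, ?_, ?_⟩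
      · funext x
        rcases x with l | ⟨l, hl⟩ <;> simp [Dmap] <;> ring
      · rintro (l | ⟨l, hl⟩)
        · by_cases hl : l = i
          · subst hl; simp only [Dmap, Sum.elim_inl, Pi.sub_apply]; omega
          · have := hgc l hl; simp only [Dmap, Sum.elim_inl, Pi.sub_apply]; omega
        · have := hgc l hl; simp only [Dmap, Sum.elim_inr, Pi.sub_apply]; omega
end
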